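/- arXiv:2211.07949 — 3 statements merged into one kernel-verified Lean document; each statement's English description precedes it below -/
import Mathlib

section
/- Let T ≥ 1, let S ⪰ 0 and W ⪰ 0 be n×n real symmetric matrices with W̃ the PSD square root of W, and let Q₁,…,Q_T be n×n real matrices with ∑_{t=1}^T Q_tᵀ Q_t ⪯ I. Then for every sequence X₁,…,X_T of positive semidefinite matrices with X₁ + S ≻ 0, the cost J_T = ∑_{t=1}^T [tr(W X̄_t⁻¹) + tr(X_t)], where X̄_t = ∑_{k=1}^t X_k + tS, satisfies J_T ≥ -2 ∑_{t=1}^T tr(Q_t W̃) - ∑_{t=1}^T t · tr(Q_t S Q_tᵀ). -/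
/-!
Weak duality. Each `Q t` acts as a dual variable: completing the square,
`0 ≤ tr ((W̃ + Q X̄) X̄⁻¹ (W̃ + Q X̄)ᵀ)`, bounds `tr (W X̄_t⁻¹)` below by
`-2 tr (Q_t W̃) - tr (Q_t X̄_t Q_tᵀ)`. The quadratic term splits into an `S`-part, which appears
in the bound, and `∑_t tr (Q_t (∑_{k ≤ t} X_k) Q_tᵀ)`. Exchanging the order of summation turns
the latter into `∑_k tr ((∑_{t ≥ k} Q_tᵀ Q_t) X_k)`, and since every tail sum of the `Q_tᵀ Q_t`
lies below `I`, it is at most `∑_k tr X_k`.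
-/

open Matrix Finset

open scoped MatrixOrder

namespace Matrix

lemma posDef_sum_Icc_add_natCast_smul {ι : Type*} {S : Matrix ι ι ℝ} {X : ℕ → Matrix ι ι ℝ}
    (hS : S.PosSemidef) (hX1S : (X 1 + S).PosDef) {t : ℕ} (ht : 1 ≤ t)
    (hX : ∀ k ∈ Icc 1 t, (X k).PosSemidef) :
    ((∑ k ∈ Icc 1 t, X k) + (t : ℝ) • S).PosDef := by
  induction t, ht using Nat.le_induction with
  | base => simpa using hX1S
  | succ t ht ih =>
    have hsucc : (∑ k ∈ Icc 1 (t + 1), X k) + ((t + 1 : ℕ) : ℝ) • S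
        = ((∑ k ∈ Icc 1 t, X k) + (t : ℝ) • S) + (X (t + 1) + S) := by
      rw [sum_Icc_succ_top (by omega), Nat.cast_succ, add_smul, one_smul]
      abel
    rw [hsucc]
    exact (ih fun k hk => hX k (Icc_subset_Icc_right t.le_succ hk)).add_posSemidef
      ((hX (t + 1) (right_mem_Icc.mpr (by omega))).add hS)

variable {ι : Type*} [Fintype ι]

lemma PosSemidef.trace_mul_nonneg {A B : Matrix ι ι ℝ} (hA : A.PosSemidef)
    (hB : B.PosSemidef) : 0 ≤ (A * B).trace := by
  classical
  have hsq : CFC.sqrt A * CFC.sqrt A = A := CFC.sqrt_mul_sqrt_self A hA.nonneg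
  have hself : (CFC.sqrt A)ᴴ = CFC.sqrt A := (CFC.sqrt_nonneg A).isSelfAdjoint.star_eq
  rw [← hsq, Matrix.mul_assoc, trace_mul_comm, Matrix.mul_assoc]
  nth_rewrite 2 [← hself]
  rw [← Matrix.mul_assoc]
  exact (hB.mul_mul_conjTranspose_same (CFC.sqrt A)).trace_nonneg

lemma trace_mul_le_trace_mul_of_le {A B X : Matrix ι ι ℝ} (hAB : A ≤ B)
    (hX : X.PosSemidef) : (A * X).trace ≤ (B * X).trace := by
  have := (le_iff.mp hAB).trace_mul_nonneg hX
  rwa [Matrix.sub_mul, trace_sub, sub_nonneg] at this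

variable [DecidableEq ι]

lemma neg_two_mul_trace_sub_trace_le_trace_mul_inv {M V : Matrix ι ι ℝ} (hM : M.PosDef)
    (hV : V.IsHermitian) (Q : Matrix ι ι ℝ) :
    -2 * (Q * V).trace - (Q * M * Qᵀ).trace ≤ (V * V * M⁻¹).trace := by
  have hdet : IsUnit M.det := (isUnit_iff_isUnit_det M).mp hM.isUnit
  have hexpand : (V + Q * M) * M⁻¹ * (V + Q * M)ᴴ
      = V * M⁻¹ * V + V * Qᵀ + (Q * V + Q * M * Qᵀ) := by
    rw [conjTranspose_add, conjTranspose_mul, hM.isHermitian.eq, hV.eq,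
      conjTranspose_eq_transpose_of_trivial, add_mul,
      mul_nonsing_inv_cancel_right (A := M) _ hdet, add_mul, mul_add, mul_add,
      Matrix.mul_assoc V M⁻¹ (M * Qᵀ), nonsing_inv_mul_cancel_left (A := M) _ hdet,
      Matrix.mul_assoc Q M]
  have hVQ : (V * Qᵀ).trace = (Q * V).trace := by
    rw [← trace_transpose, transpose_mul, transpose_transpose,
      ← conjTranspose_eq_transpose_of_trivial, hV.eq]
  have hsquare := (hM.inv.posSemidef.mul_mul_conjTranspose_same (V + Q * M)).trace_nonneg
  rw [hexpand, trace_add, trace_add, trace_add, hVQ, trace_mul_cycle V M⁻¹ V] at hsquare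
  linarith

end Matrix

lemma Finset.sum_Icc_Icc_comm {M : Type*} [AddCommMonoid M] (T : ℕ) (f : ℕ → ℕ → M) :
    ∑ t ∈ Icc 1 T, ∑ k ∈ Icc 1 t, f t k = ∑ k ∈ Icc 1 T, ∑ t ∈ Icc k T, f t k :=
  sum_comm' fun t k => by simp only [mem_Icc]; omega

lemma sum_trace_mul_sum_Icc_mul_transpose_le {ι : Type*} [Fintype ι] [DecidableEq ι] {T : ℕ}
    {Q X : ℕ → Matrix ι ι ℝ} (hQ : ∑ t ∈ Icc 1 T, (Q t)ᵀ * Q t ≤ 1)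
    (hX : ∀ t ∈ Icc 1 T, (X t).PosSemidef) :
    ∑ t ∈ Icc 1 T, (Q t * (∑ k ∈ Icc 1 t, X k) * (Q t)ᵀ).trace ≤ ∑ t ∈ Icc 1 T, (X t).trace := by
  have htail : ∀ k ∈ Icc 1 T, ∑ t ∈ Icc k T, (Q t)ᵀ * Q t ≤ 1 := fun k hk =>
    le_trans (sum_le_sum_of_subset_of_nonneg (Icc_subset_Icc_left (mem_Icc.mp hk).1)
      fun t _ _ => by
        simpa only [conjTranspose_eq_transpose_of_trivial]
          using (posSemidef_conjTranspose_mul_self (Q t)).nonneg) hQ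
  calc ∑ t ∈ Icc 1 T, (Q t * (∑ k ∈ Icc 1 t, X k) * (Q t)ᵀ).trace
      = ∑ t ∈ Icc 1 T, ∑ k ∈ Icc 1 t, ((Q t)ᵀ * Q t * X k).trace := by
        refine sum_congr rfl fun t _ => ?_
        rw [trace_mul_cycle, Matrix.mul_sum, trace_sum]
    _ = ∑ k ∈ Icc 1 T, ((∑ t ∈ Icc k T, (Q t)ᵀ * Q t) * X k).trace := by
        simp only [sum_Icc_Icc_comm, sum_mul, trace_sum]
    _ ≤ ∑ k ∈ Icc 1 T, ((1 : Matrix ι ι ℝ) * X k).trace :=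
        sum_le_sum fun k hk => trace_mul_le_trace_mul_of_le (htail k hk) (hX k hk)
    _ = ∑ k ∈ Icc 1 T, (X k).trace := by simp only [Matrix.one_mul]

theorem stmt_9_general (n T : ℕ)
    (S W Wt : Matrix (Fin n) (Fin n) ℝ)
    (hS : S.PosSemidef) (hWt : Wt.PosSemidef)
    (hWtsq : Wt * Wt = W)
    (Q : ℕ → Matrix (Fin n) (Fin n) ℝ)
    (hQ : ((1 : Matrix (Fin n) (Fin n) ℝ)
        - ∑ t ∈ Finset.Icc 1 T, (Q t)ᵀ * Q t).PosSemidef)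
    (X : ℕ → Matrix (Fin n) (Fin n) ℝ)
    (hX : ∀ t ∈ Finset.Icc 1 T, (X t).PosSemidef)
    (hX1S : (X 1 + S).PosDef) :
    -2 * ∑ t ∈ Finset.Icc 1 T, (Q t * Wt).trace
      - ∑ t ∈ Finset.Icc 1 T, (t:ℝ) * (Q t * S * (Q t)ᵀ).trace
    ≤ ∑ t ∈ Finset.Icc 1 T,
        ((W * ((∑ k ∈ Finset.Icc 1 t, X k) + (t:ℝ) • S)⁻¹).trace + (X t).trace) := by
  have hdual : ∀ t ∈ Icc 1 T, -2 * (Q t * Wt).trace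
      - (Q t * ((∑ k ∈ Icc 1 t, X k) + (t : ℝ) • S) * (Q t)ᵀ).trace
      ≤ (W * ((∑ k ∈ Icc 1 t, X k) + (t : ℝ) • S)⁻¹).trace := fun t ht => by
    obtain ⟨ht1, htT⟩ := mem_Icc.mp ht
    rw [← hWtsq]
    exact neg_two_mul_trace_sub_trace_le_trace_mul_inv
      (posDef_sum_Icc_add_natCast_smul hS hX1S ht1 fun k hk => hX k (Icc_subset_Icc_right htT hk))
      hWt.isHermitian (Q t)
  have hsplit : ∀ t : ℕ, (Q t * ((∑ k ∈ Icc 1 t, X k) + (t : ℝ) • S) * (Q t)ᵀ).trace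
      = (Q t * (∑ k ∈ Icc 1 t, X k) * (Q t)ᵀ).trace + t * (Q t * S * (Q t)ᵀ).trace := fun t => by
    rw [mul_add, add_mul, Matrix.mul_smul, Matrix.smul_mul, trace_add, trace_smul, smul_eq_mul]
  have hsum := sum_le_sum hdual
  have htail := sum_trace_mul_sum_Icc_mul_transpose_le (le_iff.mpr hQ) hX
  simp only [hsplit, sum_sub_distrib, sum_add_distrib, ← mul_sum] at hsum ⊢
  linarith

theorem stmt_9 (n T : ℕ) (hT : 1 ≤ T)
    (S W Wt : Matrix (Fin n) (Fin n) ℝ)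
    (hS : S.PosSemidef) (hW : W.PosSemidef) (hWt : Wt.PosSemidef)
    (hWtsq : Wt * Wt = W)
    (Q : ℕ → Matrix (Fin n) (Fin n) ℝ)
    (hQ : ((1 : Matrix (Fin n) (Fin n) ℝ)
        - ∑ t ∈ Finset.Icc 1 T, (Q t)ᵀ * Q t).PosSemidef)
    (X : ℕ → Matrix (Fin n) (Fin n) ℝ)
    (hX : ∀ t ∈ Finset.Icc 1 T, (X t).PosSemidef)
    (hX1S : (X 1 + S).PosDef) :
    -2 * ∑ t ∈ Finset.Icc 1 T, (Q t * Wt).trace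
      - ∑ t ∈ Finset.Icc 1 T, (t:ℝ) * (Q t * S * (Q t)ᵀ).trace
    ≤ ∑ t ∈ Finset.Icc 1 T,
        ((W * ((∑ k ∈ Finset.Icc 1 t, X k) + (t:ℝ) • S)⁻¹).trace + (X t).trace) :=
  stmt_9_general n T S W Wt hS hWt hWtsq Q hQ X hX hX1S
end

section
/- Let n ≥ 1, T ≥ 1, let {e_k} ∪ {n_j}_{j=1}^m be an orthonormal basis of ℝⁿ, S = ∑_k λ_k e_k e_kᵀ with λ_k > 0, W ≻ 0 with positive definite square root W̃, and X₁ = √T ∑_j (n_jᵀW̃n_j) n_j n_jᵀ, X_t = 0 for t ≥ 2. Then J_T = ∑_{t=1}^T [tr(W(X₁ + tS)⁻¹) + tr(X_t)] ≤ √T·(∑_j n_jᵀWn_j/(n_jᵀW̃n_j) + ∑_j n_jᵀW̃n_j) + γ_T·∑_k e_kᵀWe_k/λ_k, where γ_T = ∑_{t=1}^T 1/t. -/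
open Matrix BigOperators Finset Real

/-!
In the orthonormal basis `{n_j} ∪ {e_k}` the matrix `X₁ + t S` is diagonal with eigenvalues
`√T (n_jᵀ W̃ n_j)` and `t λ_k`, so its inverse, and hence `tr (W (X₁ + t S)⁻¹)`, is explicit.
Summing over `t = 1, …, T`, the `n_j`-part picks up `T / √T = √T` and the `e_k`-part the
harmonic number `γ_T`, while only `X₁` contributes a trace. The bound holds with equality.
-/

lemma trace_mul_sum_smul_vecMulVec_self {R ι n : Type*} [CommSemiring R] [Fintype ι]
    [Fintype n] (W : Matrix n n R) (v : ι → n → R) (d : ι → R) :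
    (W * ∑ i, d i • vecMulVec (v i) (v i)).trace = ∑ i, d i * (v i ⬝ᵥ (W *ᵥ v i)) := by
  simp [Matrix.mul_sum, trace_sum, mul_vecMulVec, dotProduct_comm]

section Orthonormal

variable {K ι n : Type*} [Field K] [Fintype n] [DecidableEq ι]

lemma sum_elim_orthonormal {κ : Type*} [DecidableEq κ] {a : ι → n → K} {b : κ → n → K}
    (ha : ∀ i j, a i ⬝ᵥ a j = if i = j then 1 else 0)
    (hb : ∀ k l, b k ⬝ᵥ b l = if k = l then 1 else 0)
    (hab : ∀ i k, a i ⬝ᵥ b k = 0) :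
    ∀ x y, Sum.elim a b x ⬝ᵥ Sum.elim a b y = if x = y then 1 else 0 := by
  rintro (i | k) (j | l) <;> simp [ha, hb, hab, dotProduct_comm (b _)]

variable [Fintype ι] [DecidableEq n] {v : ι → n → K}

lemma sum_vecMulVec_self_eq_one (hv : ∀ i j, v i ⬝ᵥ v j = if i = j then 1 else 0)
    (hcard : Fintype.card ι = Fintype.card n) : ∑ i, vecMulVec (v i) (v i) = 1 := by
  have hrows : Matrix.of v * (Matrix.of v)ᵀ = 1 := by
    ext i j
    simpa [Matrix.mul_apply, dotProduct, Matrix.one_apply] using hv i j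
  rw [← (mul_eq_one_comm_of_card_eq _ _ _ hcard).mp hrows]
  ext a b
  simp [Matrix.mul_apply, Matrix.sum_apply, vecMulVec_apply]

lemma inv_sum_smul_vecMulVec_self (hv : ∀ i j, v i ⬝ᵥ v j = if i = j then 1 else 0)
    (hcard : Fintype.card ι = Fintype.card n) {d : ι → K} (hd : ∀ i, d i ≠ 0) :
    (∑ i, d i • vecMulVec (v i) (v i))⁻¹ = ∑ i, (d i)⁻¹ • vecMulVec (v i) (v i) := by
  have hterm : ∀ i j, (d i • vecMulVec (v i) (v i)) * ((d j)⁻¹ • vecMulVec (v j) (v j)) =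
      if i = j then vecMulVec (v i) (v i) else 0 := by
    intro i j
    split_ifs with h
    · subst h
      simp [vecMulVec_mul_vecMulVec, hv, smul_smul, hd]
    · simp [vecMulVec_mul_vecMulVec, hv, h]
  apply Matrix.inv_eq_right_inv
  simp only [Matrix.sum_mul, Matrix.mul_sum, hterm, Finset.sum_ite_eq', Finset.mem_univ, if_true]
  exact sum_vecMulVec_self_eq_one hv hcard

lemma trace_mul_inv_sum_smul_vecMulVec_self (W : Matrix n n K)
    (hv : ∀ i j, v i ⬝ᵥ v j = if i = j then 1 else 0)
    (hcard : Fintype.card ι = Fintype.card n) {d : ι → K} (hd : ∀ i, d i ≠ 0) :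
    (W * (∑ i, d i • vecMulVec (v i) (v i))⁻¹).trace = ∑ i, v i ⬝ᵥ (W *ᵥ v i) / d i := by
  simp only [inv_sum_smul_vecMulVec_self hv hcard hd, trace_mul_sum_smul_vecMulVec_self,
    div_eq_inv_mul]

lemma trace_mul_inv_add_sum_smul_vecMulVec_self {κ : Type*} [Fintype κ]
    [DecidableEq κ] (W : Matrix n n K) {a : ι → n → K} {b : κ → n → K}
    (ha : ∀ i j, a i ⬝ᵥ a j = if i = j then 1 else 0)
    (hb : ∀ k l, b k ⬝ᵥ b l = if k = l then 1 else 0)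
    (hab : ∀ i k, a i ⬝ᵥ b k = 0) (hcard : Fintype.card ι + Fintype.card κ = Fintype.card n)
    {α : ι → K} {β : κ → K} (hα : ∀ i, α i ≠ 0) (hβ : ∀ k, β k ≠ 0) :
    (W * (∑ i, α i • vecMulVec (a i) (a i) + ∑ k, β k • vecMulVec (b k) (b k))⁻¹).trace =
      ∑ i, a i ⬝ᵥ (W *ᵥ a i) / α i + ∑ k, b k ⬝ᵥ (W *ᵥ b k) / β k := by
  have hd : ∀ x, Sum.elim α β x ≠ 0 := by rintro (i | k) <;> simp [hα, hβ]
  simpa [Fintype.sum_sum_type] using trace_mul_inv_sum_smul_vecMulVec_self W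
    (sum_elim_orthonormal ha hb hab) (by simpa using hcard) hd

end Orthonormal

theorem stmt_16_general (n m p T : ℕ) (hT : 1 ≤ T) (hmp : m + p = n)
    (nv : Fin m → (Fin n → ℝ)) (ev : Fin p → (Fin n → ℝ))
    (hon : ∀ j j', nv j ⬝ᵥ nv j' = if j = j' then 1 else 0)
    (hoe : ∀ k k', ev k ⬝ᵥ ev k' = if k = k' then 1 else 0)
    (hne : ∀ j k, nv j ⬝ᵥ ev k = 0)
    (lam : Fin p → ℝ) (hlam : ∀ k, 0 < lam k)
    (S : Matrix (Fin n) (Fin n) ℝ)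
    (hS : S = ∑ k, lam k • Matrix.vecMulVec (ev k) (ev k))
    (W Wt : Matrix (Fin n) (Fin n) ℝ) (hWt : Wt.PosDef)
    (X1 : Matrix (Fin n) (Fin n) ℝ)
    (hX1 : X1 = Real.sqrt T •
      ∑ j, (nv j ⬝ᵥ (Wt *ᵥ nv j)) • Matrix.vecMulVec (nv j) (nv j))
    (X : ℕ → Matrix (Fin n) (Fin n) ℝ)
    (hXone : X 1 = X1) (hXt : ∀ t, 2 ≤ t → X t = 0) :
    ∑ t ∈ Finset.Icc 1 T, ((W * (X1 + (t:ℝ) • S)⁻¹).trace + (X t).trace)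
    ≤ Real.sqrt T *
        ((∑ j, (nv j ⬝ᵥ (W *ᵥ nv j)) / (nv j ⬝ᵥ (Wt *ᵥ nv j)))
          + ∑ j, nv j ⬝ᵥ (Wt *ᵥ nv j))
      + (∑ t ∈ Finset.Icc 1 T, (1:ℝ)/(t:ℝ)) * ∑ k, (ev k ⬝ᵥ (W *ᵥ ev k)) / lam k := by
  have hsqrt : 0 < √(T : ℝ) := by positivity
  have hc : ∀ j, 0 < nv j ⬝ᵥ (Wt *ᵥ nv j) := fun j =>
    hWt.dotProduct_mulVec_pos fun h => by simpa [h] using hon j j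
  have htrace_inv : ∀ t ∈ Icc 1 T, (W * (X1 + (t:ℝ) • S)⁻¹).trace =
      (√T)⁻¹ * ∑ j, (nv j ⬝ᵥ (W *ᵥ nv j)) / (nv j ⬝ᵥ (Wt *ᵥ nv j)) +
        1 / t * ∑ k, (ev k ⬝ᵥ (W *ᵥ ev k)) / lam k := by
    intro t ht
    have ht : (0 : ℝ) < t := by exact_mod_cast (mem_Icc.mp ht).1
    have hdiag : X1 + (t:ℝ) • S = ∑ j, (√T * nv j ⬝ᵥ (Wt *ᵥ nv j)) • vecMulVec (nv j) (nv j) +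
        ∑ k, (t * lam k) • vecMulVec (ev k) (ev k) := by
      simp only [hX1, hS, smul_sum, smul_smul]
    rw [hdiag, trace_mul_inv_add_sum_smul_vecMulVec_self W hon hoe hne (by simpa using hmp)
      (fun j => (mul_pos hsqrt (hc j)).ne') (fun k => (mul_pos ht (hlam k)).ne'), mul_sum, mul_sum]
    congr 1 <;> exact sum_congr rfl fun _ _ => by ring
  have htrace_X : ∑ t ∈ Icc 1 T, (X t).trace = √T * ∑ j, nv j ⬝ᵥ (Wt *ᵥ nv j) := by
    rw [sum_eq_single_of_mem 1 (by simp [hT]) fun t ht h1 => by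
      rw [hXt t (by grind), trace_zero], hXone, hX1]
    simp [trace_sum, hon]
  have hsum_inv_sqrt : ∑ _t ∈ Icc 1 T, (√(T : ℝ))⁻¹ = √T := by
    simp [← div_eq_mul_inv, Real.div_sqrt]
  refine le_of_eq ?_
  rw [sum_add_distrib, sum_congr rfl htrace_inv, sum_add_distrib, ← sum_mul, ← sum_mul,
    hsum_inv_sqrt, htrace_X]
  ring

theorem stmt_16 (n m p T : ℕ) (hn : 1 ≤ n) (hT : 1 ≤ T) (hmp : m + p = n)
    (nv : Fin m → (Fin n → ℝ)) (ev : Fin p → (Fin n → ℝ))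
    (hon : ∀ j j', nv j ⬝ᵥ nv j' = if j = j' then 1 else 0)
    (hoe : ∀ k k', ev k ⬝ᵥ ev k' = if k = k' then 1 else 0)
    (hne : ∀ j k, nv j ⬝ᵥ ev k = 0)
    (lam : Fin p → ℝ) (hlam : ∀ k, 0 < lam k)
    (S : Matrix (Fin n) (Fin n) ℝ)
    (hS : S = ∑ k, lam k • Matrix.vecMulVec (ev k) (ev k))
    (W Wt : Matrix (Fin n) (Fin n) ℝ) (hW : W.PosDef) (hWt : Wt.PosDef)
    (hWtsq : Wt * Wt = W)
    (X1 : Matrix (Fin n) (Fin n) ℝ)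
    (hX1 : X1 = Real.sqrt T •
      ∑ j, (nv j ⬝ᵥ (Wt *ᵥ nv j)) • Matrix.vecMulVec (nv j) (nv j))
    (X : ℕ → Matrix (Fin n) (Fin n) ℝ)
    (hXone : X 1 = X1) (hXt : ∀ t, 2 ≤ t → X t = 0) :
    ∑ t ∈ Finset.Icc 1 T, ((W * (X1 + (t:ℝ) • S)⁻¹).trace + (X t).trace)
    ≤ Real.sqrt T *
        ((∑ j, (nv j ⬝ᵥ (W *ᵥ nv j)) / (nv j ⬝ᵥ (Wt *ᵥ nv j)))
          + ∑ j, nv j ⬝ᵥ (Wt *ᵥ nv j))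
      + (∑ t ∈ Finset.Icc 1 T, (1:ℝ)/(t:ℝ)) * ∑ k, (ev k ⬝ᵥ (W *ᵥ ev k)) / lam k :=
  stmt_16_general n m p T hT hmp nv ev hon hoe hne lam hlam S hS W Wt hWt X1 hX1 X hXone hXt
end

section
/- Let W ≻ 0 be an n×n real symmetric matrix with positive definite square root W̃, T ≥ 1, and S = 0. Then the minimum of J_T = ∑_{t=1}^T [tr(W X̄_t⁻¹) + tr(X_t)] over sequences X₁,…,X_T with X₁ ≻ 0 and X_t ⪰ 0 for t ≥ 2, where X̄_t = ∑_{k=1}^t X_k, equals 2√T · tr(W̃), attained by X₁ = √T·W̃, X_t = 0 for t ≥ 2. -/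
open Matrix BigOperators Finset Real

/-!
With `S_t = X₁ + ⋯ + X_t ≻ 0`, positivity of `(W̃ - c S_t) S_t⁻¹ (W̃ - c S_t)` gives
`tr (W S_t⁻¹) ≥ 2 c tr W̃ - c² tr S_t` for every real `c`. Summing over `t`, using
`tr S_t ≤ tr S_T` and `∑ tr X_t = tr S_T`, yields
`J_T ≥ 2 c T tr W̃ + (1 - c² T) tr S_T`, which for `c = 1/√T` is `2 √T tr W̃`.
The single deposit `X₁ = √T W̃` makes every `S_t = √T W̃` and attains this value.
-/

namespace Matrix

variable {ι : Type*}

theorem posDef_sum_Icc_one {X : ℕ → Matrix ι ι ℝ} (hX1 : (X 1).PosDef)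
    (hX : ∀ t, 2 ≤ t → (X t).PosSemidef) {t : ℕ} (ht : 1 ≤ t) :
    (∑ k ∈ Icc 1 t, X k).PosDef := by
  rw [← add_sum_Ioc_eq_sum_Icc ht]
  exact hX1.add_posSemidef (posSemidef_sum _ fun k hk => hX k (mem_Ioc.1 hk).1)

theorem trace_sum_le_of_subset [Fintype ι] {κ : Type*} {s s' : Finset κ}
    {X : κ → Matrix ι ι ℝ} (h : s ⊆ s') (hX : ∀ k ∈ s', (X k).PosSemidef) :
    (∑ k ∈ s, X k).trace ≤ (∑ k ∈ s', X k).trace := by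
  simp only [trace_sum]
  exact sum_le_sum_of_subset_of_nonneg h fun k hk _ => (hX k hk).trace_nonneg

variable [Fintype ι] [DecidableEq ι]

theorem two_mul_trace_sub_le_trace_mul_inv {A B : Matrix ι ι ℝ} (hA : A.PosDef)
    (hB : B.IsHermitian) (c : ℝ) :
    2 * c * B.trace - c ^ 2 * A.trace ≤ (B * B * A⁻¹).trace := by
  have hdet : IsUnit A.det := isUnit_iff_ne_zero.mpr hA.det_pos.ne'
  have hsq := (hA.inv.posSemidef.mul_mul_conjTranspose_same (B - c • A)).trace_nonneg
  have hexpand : (B - c • A) * A⁻¹ * (B - c • A)ᴴ = B * A⁻¹ * B - (2 * c) • B + c ^ 2 • A := by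
    rw [conjTranspose_sub, conjTranspose_smul, hB.eq, hA.isHermitian.eq, star_trivial]
    simp only [sub_mul, mul_sub, Matrix.smul_mul, Matrix.mul_smul, mul_nonsing_inv _ hdet,
      Matrix.mul_assoc, nonsing_inv_mul _ hdet, smul_smul, Matrix.one_mul, Matrix.mul_one]
    module
  rw [hexpand, trace_add, trace_sub, trace_smul, trace_smul, trace_mul_cycle] at hsq
  simp only [smul_eq_mul] at hsq
  linarith

theorem mul_self_mul_inv_smul {A : Matrix ι ι ℝ} (hA : IsUnit A.det) {c : ℝ} (hc : c ≠ 0) :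
    A * A * (c • A)⁻¹ = c⁻¹ • A := by
  have hinv : (c • A)⁻¹ = c⁻¹ • A⁻¹ :=
    inv_eq_left_inv (by simp [smul_smul, hc, nonsing_inv_mul _ hA])
  rw [hinv, Matrix.mul_smul, Matrix.mul_assoc, mul_nonsing_inv _ hA, Matrix.mul_one]

end Matrix

section HorizonCost

variable {ι : Type*} [Fintype ι] [DecidableEq ι]

noncomputable def horizonCost (W : Matrix ι ι ℝ) (X : ℕ → Matrix ι ι ℝ) (T : ℕ) : ℝ :=
  ∑ t ∈ Icc 1 T, ((W * (∑ k ∈ Icc 1 t, X k)⁻¹).trace + (X t).trace)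

theorem horizonCost_single (W M : Matrix ι ι ℝ) {T : ℕ} (hT : 1 ≤ T) :
    horizonCost W (Pi.single 1 M) T = T * (W * M⁻¹).trace + M.trace := by
  have hpartial : ∀ t ∈ Icc 1 T, ∑ k ∈ Icc 1 t, Pi.single 1 M k = M := fun t ht => by
    simp [sum_pi_single', (mem_Icc.1 ht).1]
  rw [horizonCost, sum_add_distrib, sum_congr rfl fun t ht => by rw [hpartial t ht],
    ← trace_sum (Icc 1 T) (Pi.single 1 M), sum_pi_single', if_pos (left_mem_Icc.2 hT)]
  simp

theorem le_horizonCost {Wt : Matrix ι ι ℝ} (hWt : Wt.IsHermitian) {X : ℕ → Matrix ι ι ℝ}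
    (hX1 : (X 1).PosDef) (hX : ∀ t, 2 ≤ t → (X t).PosSemidef) (T : ℕ) (c : ℝ) :
    T * (2 * c * Wt.trace) + (1 - c ^ 2 * T) * (∑ k ∈ Icc 1 T, X k).trace
      ≤ horizonCost (Wt * Wt) X T := by
  have hpsd : ∀ t ∈ Icc 1 T, (X t).PosSemidef := fun t ht => by
    rcases (mem_Icc.1 ht).1.eq_or_lt with rfl | h
    exacts [hX1.posSemidef, hX t h]
  have hstep : ∀ t ∈ Icc 1 T, 2 * c * Wt.trace - c ^ 2 * (∑ k ∈ Icc 1 T, X k).trace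
      ≤ (Wt * Wt * (∑ k ∈ Icc 1 t, X k)⁻¹).trace := fun t ht => calc
    _ ≤ 2 * c * Wt.trace - c ^ 2 * (∑ k ∈ Icc 1 t, X k).trace := by
      gcongr
      exact trace_sum_le_of_subset (Icc_subset_Icc_right (mem_Icc.1 ht).2) hpsd
    _ ≤ _ := two_mul_trace_sub_le_trace_mul_inv
      (posDef_sum_Icc_one hX1 hX (mem_Icc.1 ht).1) hWt c
  calc _ = ∑ t ∈ Icc 1 T, (2 * c * Wt.trace - c ^ 2 * (∑ k ∈ Icc 1 T, X k).trace)
        + (∑ k ∈ Icc 1 T, X k).trace := by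
        rw [sum_const, Nat.card_Icc, nsmul_eq_mul, Nat.add_sub_cancel]
        ring
    _ ≤ _ := by
      rw [horizonCost, sum_add_distrib]
      exact add_le_add (sum_le_sum hstep) (trace_sum _ _).le

end HorizonCost

theorem stmt_17_general (n T : ℕ) (hT : 1 ≤ T) (W Wt : Matrix (Fin n) (Fin n) ℝ)
    (hWt : Wt.PosDef) (hWtsq : Wt * Wt = W) :
    IsLeast {J : ℝ | ∃ X : ℕ → Matrix (Fin n) (Fin n) ℝ,
        (X 1).PosDef ∧ (∀ t, 2 ≤ t → (X t).PosSemidef) ∧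
        J = ∑ t ∈ Finset.Icc 1 T,
          ((W * (∑ k ∈ Finset.Icc 1 t, X k)⁻¹).trace + (X t).trace)}
      (2 * Real.sqrt T * Wt.trace)
    ∧ ∑ t ∈ Finset.Icc 1 T,
        ((W * (∑ k ∈ Finset.Icc 1 t,
            (fun s : ℕ => if s = 1 then Real.sqrt T • Wt else 0) k)⁻¹).trace
          + ((fun s : ℕ => if s = 1 then Real.sqrt T • Wt else 0) t).trace)
      = 2 * Real.sqrt T * Wt.trace := by
  subst hWtsq
  have hTpos : (0 : ℝ) < T := by exact_mod_cast hT
  have hsqrt : 0 < √(T : ℝ) := sqrt_pos.2 hTpos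
  have hsingle : (fun s : ℕ => if s = 1 then √(T : ℝ) • Wt else 0) = Pi.single 1 (√T • Wt) :=
    funext fun s => (Pi.single_apply 1 _ s).symm
  have hvalue : horizonCost (Wt * Wt) (Pi.single 1 (√T • Wt)) T = 2 * √T * Wt.trace := by
    rw [horizonCost_single _ _ hT, mul_self_mul_inv_smul (isUnit_iff_ne_zero.2 hWt.det_pos.ne')
      hsqrt.ne', trace_smul, trace_smul, smul_eq_mul, smul_eq_mul, ← mul_assoc,
      ← div_eq_mul_inv, div_sqrt]
    ring
  rw [hsingle]
  refine ⟨⟨⟨_, ?_, ?_, hvalue.symm⟩, ?_⟩, hvalue⟩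
  · simpa using hWt.smul hsqrt
  · intro t ht
    simpa [Pi.single_apply, show t ≠ 1 by omega] using PosSemidef.zero
  · rintro J ⟨X, hX1, hX, rfl⟩
    have hc : (√(T : ℝ))⁻¹ ^ 2 * T = 1 := by
      rw [inv_pow, sq_sqrt hTpos.le, inv_mul_cancel₀ hTpos.ne']
    have hT_div : (T : ℝ) * (√T)⁻¹ = √T := by rw [← div_eq_mul_inv, div_sqrt]
    calc 2 * √T * Wt.trace
        = T * (2 * (√T)⁻¹ * Wt.trace) + (1 - (√T)⁻¹ ^ 2 * T) * (∑ k ∈ Icc 1 T, X k).trace := by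
          rw [hc]
          linear_combination -2 * Wt.trace * hT_div
      _ ≤ horizonCost (Wt * Wt) X T := le_horizonCost hWt.isHermitian hX1 hX T (√T)⁻¹

theorem stmt_17 (n T : ℕ) (hT : 1 ≤ T) (W Wt : Matrix (Fin n) (Fin n) ℝ)
    (hW : W.PosDef) (hWt : Wt.PosDef) (hWtsq : Wt * Wt = W) :
    IsLeast {J : ℝ | ∃ X : ℕ → Matrix (Fin n) (Fin n) ℝ,
        (X 1).PosDef ∧ (∀ t, 2 ≤ t → (X t).PosSemidef) ∧
        J = ∑ t ∈ Finset.Icc 1 T,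
          ((W * (∑ k ∈ Finset.Icc 1 t, X k)⁻¹).trace + (X t).trace)}
      (2 * Real.sqrt T * Wt.trace)
    ∧ ∑ t ∈ Finset.Icc 1 T,
        ((W * (∑ k ∈ Finset.Icc 1 t,
            (fun s : ℕ => if s = 1 then Real.sqrt T • Wt else 0) k)⁻¹).trace
          + ((fun s : ℕ => if s = 1 then Real.sqrt T • Wt else 0) t).trace)
      = 2 * Real.sqrt T * Wt.trace :=
  stmt_17_general n T hT W Wt hWt hWtsq
end
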